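/- Let ε > 0 and let Z₁, Z₂ be independent Laplace(0, 1/ε) random variables on a probability space. For all reals a, b ≥ 0, the expected misclassification count of the per-cell noisy majority classifier satisfies E[ b·1{a + Z₁ ≥ b + Z₂} + a·1{a + Z₁ < b + Z₂} ] = min(a, b)·(1 − g_ε(x)) + max(a, b)·g_ε(x), where x = |a − b| and g_ε(x) = (exp(−ε·x)/2)·(1 + ε·x/2). -/

import Mathlib

/-!
The classifier predicts positive exactly when `W := Z₂ - Z₁ ≤ a - b`, so the expected count
is `a + (b - a) * P(W ≤ a - b)`. By independence and Fubini, `P(W ≤ t) = ∫ F(t + z) f(z) dz`,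
where `f` and `F` are the Laplace density and distribution function. For `t ≥ 0`, cutting the
line at `-t` and `0` makes both factors explicit exponentials, and the three pieces add up to
`1 - g_ε(t)`; the symmetry `F(u) + F(-u) = 1` then gives `P(W ≤ t) = g_ε(-t)` for `t ≤ 0`.
-/

open MeasureTheory Real ProbabilityTheory Set

noncomputable section

namespace ProbabilityTheory

def laplacePDFReal (ε x : ℝ) : ℝ := ε / 2 * exp (-ε * |x|)

def laplaceCDFReal (ε x : ℝ) : ℝ := if x ≤ 0 then exp (ε * x) / 2 else 1 - exp (-ε * x) / 2

def laplaceReal (ε : ℝ) : Measure ℝ :=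
  volume.withDensity fun x => ENNReal.ofReal (laplacePDFReal ε x)

/-- The function `g_ε`; for `x ≥ 0` it is `P(Z₁ - Z₂ > x)` for independent Laplace noises. -/
def laplaceDiffTail (ε x : ℝ) : ℝ := exp (-ε * x) / 2 * (1 + ε * x / 2)

variable {ε s : ℝ}

lemma laplacePDFReal_nonneg (hε : 0 ≤ ε) (x : ℝ) : 0 ≤ laplacePDFReal ε x := by
  unfold laplacePDFReal; positivity

lemma laplacePDFReal_neg (x : ℝ) : laplacePDFReal ε (-x) = laplacePDFReal ε x := by
  simp [laplacePDFReal]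

@[fun_prop]
lemma measurable_laplacePDFReal : Measurable (laplacePDFReal ε) := by
  unfold laplacePDFReal; fun_prop

lemma laplacePDFReal_of_nonpos {x : ℝ} (hx : x ≤ 0) :
    laplacePDFReal ε x = ε / 2 * exp (ε * x) := by
  rw [laplacePDFReal, abs_of_nonpos hx, neg_mul_neg]

lemma laplacePDFReal_of_nonneg {x : ℝ} (hx : 0 ≤ x) :
    laplacePDFReal ε x = ε / 2 * exp (-ε * x) := by
  rw [laplacePDFReal, abs_of_nonneg hx]

lemma integrable_laplacePDFReal (hε : 0 < ε) : Integrable (laplacePDFReal ε) := by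
  rw [← integrableOn_univ, ← Iic_union_Ioi (a := (0 : ℝ))]
  refine IntegrableOn.union ?_ ?_
  · exact IntegrableOn.congr_fun ((integrableOn_exp_mul_Iic hε 0).const_mul _)
      (fun x hx => (laplacePDFReal_of_nonpos hx).symm) measurableSet_Iic
  · exact IntegrableOn.congr_fun ((integrableOn_exp_mul_Ioi (neg_lt_zero.2 hε) 0).const_mul _)
      (fun x hx => (laplacePDFReal_of_nonneg (le_of_lt hx)).symm) measurableSet_Ioi

lemma setIntegral_laplacePDFReal_Iic_of_nonpos (hε : 0 < ε) {x : ℝ} (hx : x ≤ 0) :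
    ∫ y in Iic x, laplacePDFReal ε y = exp (ε * x) / 2 := by
  rw [setIntegral_congr_fun measurableSet_Iic
      (fun y hy => laplacePDFReal_of_nonpos (le_trans hy hx)),
    integral_const_mul, integral_exp_mul_Iic hε]
  field_simp

lemma setIntegral_laplacePDFReal_Ioi_of_nonneg (hε : 0 < ε) {x : ℝ} (hx : 0 ≤ x) :
    ∫ y in Ioi x, laplacePDFReal ε y = exp (-ε * x) / 2 := by
  rw [setIntegral_congr_fun measurableSet_Ioi
      (fun y hy => laplacePDFReal_of_nonneg (hx.trans (le_of_lt hy))),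
    integral_const_mul, integral_exp_mul_Ioi (neg_lt_zero.2 hε)]
  field_simp

lemma integral_laplacePDFReal (hε : 0 < ε) : ∫ x, laplacePDFReal ε x = 1 := by
  rw [← intervalIntegral.integral_Iic_add_Ioi (b := 0)
    (integrable_laplacePDFReal hε).integrableOn (integrable_laplacePDFReal hε).integrableOn,
    setIntegral_laplacePDFReal_Iic_of_nonpos hε le_rfl,
    setIntegral_laplacePDFReal_Ioi_of_nonneg hε le_rfl]
  norm_num

lemma setIntegral_laplacePDFReal_Iic (hε : 0 < ε) (x : ℝ) :
    ∫ y in Iic x, laplacePDFReal ε y = laplaceCDFReal ε x := by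
  rw [laplaceCDFReal]
  split_ifs with hx
  · exact setIntegral_laplacePDFReal_Iic_of_nonpos hε hx
  · rw [← integral_laplacePDFReal hε, ← intervalIntegral.integral_Iic_add_Ioi (b := x)
      (integrable_laplacePDFReal hε).integrableOn (integrable_laplacePDFReal hε).integrableOn,
      setIntegral_laplacePDFReal_Ioi_of_nonneg hε (le_of_not_ge hx), add_sub_cancel_right]

lemma laplaceCDFReal_mem_Icc (hε : 0 < ε) (x : ℝ) : laplaceCDFReal ε x ∈ Icc 0 1 := by
  rw [← setIntegral_laplacePDFReal_Iic hε]
  refine ⟨setIntegral_nonneg measurableSet_Iic fun y _ => laplacePDFReal_nonneg hε.le y, ?_⟩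
  rw [← integral_laplacePDFReal hε]
  exact setIntegral_le_integral (integrable_laplacePDFReal hε)
    (Filter.Eventually.of_forall (laplacePDFReal_nonneg hε.le))

lemma laplaceCDFReal_add_laplaceCDFReal_neg (x : ℝ) :
    laplaceCDFReal ε x + laplaceCDFReal ε (-x) = 1 := by
  rcases lt_trichotomy x 0 with hx | rfl | hx
  · rw [laplaceCDFReal, laplaceCDFReal, if_pos hx.le, if_neg (by linarith), neg_mul_neg]; ring
  · norm_num [laplaceCDFReal]
  · rw [laplaceCDFReal, laplaceCDFReal, if_neg hx.not_ge, if_pos (by linarith), mul_neg,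
      neg_mul]
    ring

lemma measurable_laplaceCDFReal : Measurable (laplaceCDFReal ε) :=
  Measurable.ite measurableSet_Iic (by fun_prop) (by fun_prop)

lemma laplaceReal_real_Iic (hε : 0 < ε) (x : ℝ) :
    (laplaceReal ε).real (Iic x) = laplaceCDFReal ε x := by
  rw [measureReal_def, laplaceReal, withDensity_apply _ measurableSet_Iic,
    ← ofReal_integral_eq_lintegral_ofReal (integrable_laplacePDFReal hε).integrableOn
      (Filter.Eventually.of_forall (laplacePDFReal_nonneg hε.le)),
    setIntegral_laplacePDFReal_Iic hε, ENNReal.toReal_ofReal (laplaceCDFReal_mem_Icc hε x).1]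

lemma integrable_laplaceCDFReal_add_mul (hε : 0 < ε) (t : ℝ) :
    Integrable fun z => laplaceCDFReal ε (t + z) * laplacePDFReal ε z :=
  (integrable_laplacePDFReal hε).bdd_mul (c := 1)
    (measurable_laplaceCDFReal.comp (measurable_const_add t)).aestronglyMeasurable
    (Filter.Eventually.of_forall fun z => by
      obtain ⟨h0, h1⟩ := laplaceCDFReal_mem_Icc hε (t + z)
      rwa [Real.norm_eq_abs, abs_of_nonneg h0])

lemma setIntegral_laplaceCDFReal_add_mul_Iic_neg (hε : 0 < ε) (hs : 0 ≤ s) :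
    ∫ z in Iic (-s), laplaceCDFReal ε (s + z) * laplacePDFReal ε z = exp (-ε * s) / 8 := by
  have hpt : ∀ z ∈ Iic (-s), laplaceCDFReal ε (s + z) * laplacePDFReal ε z
      = ε / 4 * exp (ε * s) * exp (2 * ε * z) := by
    intro z hz
    rw [laplaceCDFReal, if_pos (by linarith [mem_Iic.1 hz]),
      laplacePDFReal_of_nonpos (by linarith [mem_Iic.1 hz])]
    have : exp (ε * (s + z)) * exp (ε * z) = exp (ε * s) * exp (2 * ε * z) := by
      rw [← exp_add, ← exp_add]; ring_nf
    linear_combination (ε / 4) * this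
  rw [setIntegral_congr_fun measurableSet_Iic hpt, integral_const_mul,
    integral_exp_mul_Iic (by positivity), mul_div_assoc', mul_assoc, ← exp_add]
  field_simp
  ring_nf

lemma setIntegral_laplaceCDFReal_add_mul_Ioc_neg (hε : 0 < ε) (hs : 0 ≤ s) :
    ∫ z in Ioc (-s) 0, laplaceCDFReal ε (s + z) * laplacePDFReal ε z
      = (1 - exp (-ε * s)) / 2 - ε * s * exp (-ε * s) / 4 := by
  have hpt : ∀ z ∈ Ioc (-s) 0, laplaceCDFReal ε (s + z) * laplacePDFReal ε z
      = laplacePDFReal ε z - ε / 4 * exp (-ε * s) := by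
    intro z hz
    rw [laplaceCDFReal, if_neg (by linarith [hz.1]), laplacePDFReal_of_nonpos hz.2]
    have : exp (-ε * (s + z)) * exp (ε * z) = exp (-ε * s) := by rw [← exp_add]; ring_nf
    linear_combination (-ε / 4) * this
  have hpdf : ∫ z in Ioc (-s) 0, laplacePDFReal ε z = (1 - exp (-ε * s)) / 2 := by
    rw [← intervalIntegral.integral_of_le (by linarith), ← intervalIntegral.integral_Iic_sub_Iic
      (integrable_laplacePDFReal hε).integrableOn (integrable_laplacePDFReal hε).integrableOn,
      setIntegral_laplacePDFReal_Iic_of_nonpos hε le_rfl,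
      setIntegral_laplacePDFReal_Iic_of_nonpos hε (by linarith), mul_zero, exp_zero, mul_neg,
      ← neg_mul]
    ring
  rw [setIntegral_congr_fun measurableSet_Ioc hpt, integral_sub
    (integrable_laplacePDFReal hε).integrableOn (integrableOn_const (by simp)), hpdf,
    setIntegral_const, volume_real_Ioc_of_le (by linarith), smul_eq_mul]
  ring

lemma setIntegral_laplaceCDFReal_add_mul_Ioi (hε : 0 < ε) (hs : 0 ≤ s) :
    ∫ z in Ioi 0, laplaceCDFReal ε (s + z) * laplacePDFReal ε z
      = 1 / 2 - exp (-ε * s) / 8 := by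
  have hpt : ∀ z ∈ Ioi (0 : ℝ), laplaceCDFReal ε (s + z) * laplacePDFReal ε z
      = laplacePDFReal ε z - ε / 4 * exp (-ε * s) * exp (-(2 * ε) * z) := by
    intro z hz
    rw [laplaceCDFReal, if_neg (by linarith [mem_Ioi.1 hz]),
      laplacePDFReal_of_nonneg (le_of_lt hz)]
    have : exp (-ε * (s + z)) * exp (-ε * z) = exp (-ε * s) * exp (-(2 * ε) * z) := by
      rw [← exp_add, ← exp_add]; ring_nf
    linear_combination (-ε / 4) * this
  have hneg : -(2 * ε) < 0 := by linarith
  rw [setIntegral_congr_fun measurableSet_Ioi hpt, integral_sub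
    (integrable_laplacePDFReal hε).integrableOn ((integrableOn_exp_mul_Ioi hneg 0).const_mul _),
    setIntegral_laplacePDFReal_Ioi_of_nonneg hε le_rfl, integral_const_mul,
    integral_exp_mul_Ioi hneg]
  simp only [mul_zero, exp_zero]
  field_simp
  ring

lemma integral_laplaceCDFReal_add_mul_of_nonneg (hε : 0 < ε) (hs : 0 ≤ s) :
    ∫ z, laplaceCDFReal ε (s + z) * laplacePDFReal ε z = 1 - laplaceDiffTail ε s := by
  have hint := integrable_laplaceCDFReal_add_mul hε s
  have hsplit : ∫ z in Iic 0, laplaceCDFReal ε (s + z) * laplacePDFReal ε z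
      = (∫ z in Iic (-s), laplaceCDFReal ε (s + z) * laplacePDFReal ε z)
        + ∫ z in Ioc (-s) 0, laplaceCDFReal ε (s + z) * laplacePDFReal ε z := by
    rw [← setIntegral_union (Iic_disjoint_Ioc le_rfl) measurableSet_Ioc hint.integrableOn
      hint.integrableOn, Iic_union_Ioc_eq_Iic (by linarith)]
  rw [← intervalIntegral.integral_Iic_add_Ioi hint.integrableOn hint.integrableOn, hsplit,
    setIntegral_laplaceCDFReal_add_mul_Iic_neg hε hs,
    setIntegral_laplaceCDFReal_add_mul_Ioc_neg hε hs,
    setIntegral_laplaceCDFReal_add_mul_Ioi hε hs, laplaceDiffTail]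
  ring

lemma integral_laplaceCDFReal_neg_add_mul (hε : 0 < ε) (t : ℝ) :
    ∫ z, laplaceCDFReal ε (-t + z) * laplacePDFReal ε z
      = 1 - ∫ z, laplaceCDFReal ε (t + z) * laplacePDFReal ε z := by
  have hpt : ∀ z, laplaceCDFReal ε (-t + -z) * laplacePDFReal ε (-z)
      = laplacePDFReal ε z - laplaceCDFReal ε (t + z) * laplacePDFReal ε z := by
    intro z
    rw [← neg_add, laplacePDFReal_neg]
    linear_combination laplacePDFReal ε z * laplaceCDFReal_add_laplaceCDFReal_neg (t + z)
  rw [← integral_neg_eq_self, integral_congr_ae (Filter.Eventually.of_forall hpt),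
    integral_sub (integrable_laplacePDFReal hε) (integrable_laplaceCDFReal_add_mul hε t),
    integral_laplacePDFReal hε]

lemma integral_laplaceCDFReal_add_mul_of_nonpos (hε : 0 < ε) {t : ℝ} (ht : t ≤ 0) :
    ∫ z, laplaceCDFReal ε (t + z) * laplacePDFReal ε z = laplaceDiffTail ε (-t) := by
  have h := integral_laplaceCDFReal_neg_add_mul hε (-t)
  rw [neg_neg] at h
  rw [h, integral_laplaceCDFReal_add_mul_of_nonneg hε (neg_nonneg.2 ht), sub_sub_cancel]

lemma integral_laplaceReal_real_Iic_add (hε : 0 < ε) (t : ℝ) :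
    ∫ z, (laplaceReal ε).real (Iic (t + z)) ∂laplaceReal ε
      = ∫ z, laplaceCDFReal ε (t + z) * laplacePDFReal ε z := by
  simp_rw [laplaceReal_real_Iic hε]
  rw [laplaceReal, integral_withDensity_eq_integral_toReal_smul (by fun_prop)
    (Filter.Eventually.of_forall fun _ => ENNReal.ofReal_lt_top)]
  congr with z
  rw [ENNReal.toReal_ofReal (laplacePDFReal_nonneg hε.le z), smul_eq_mul, mul_comm]

lemma measureReal_le_add_eq_integral {Ω : Type*} [MeasurableSpace Ω] {P : Measure Ω}
    [IsProbabilityMeasure P] {X Y : Ω → ℝ} (hX : Measurable X) (hY : Measurable Y)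
    (hXY : IndepFun X Y P) (t : ℝ) :
    P.real {ω | Y ω ≤ t + X ω} = ∫ x, (P.map Y).real (Iic (t + x)) ∂(P.map X) := by
  have hS : MeasurableSet {p : ℝ × ℝ | p.2 ≤ t + p.1} :=
    measurableSet_le measurable_snd (measurable_const.add measurable_fst)
  rw [← Set.preimage_ofPred_eq (f := fun ω => (X ω, Y ω)) (p := fun p => p.2 ≤ t + p.1),
    ← map_measureReal_apply (hX.prodMk hY) hS,
    (indepFun_iff_map_prod_eq_prod_map_map hX.aemeasurable hY.aemeasurable).1 hXY,
    measureReal_def, Measure.prod_apply hS, ← integral_toReal]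
  · rfl
  · exact (measurable_measure_prodMk_left hS).aemeasurable
  · exact Filter.Eventually.of_forall fun _ => measure_lt_top _ _

def cellMisclassification (a b x y : ℝ) : ℝ :=
  b * (if a + x ≥ b + y then 1 else 0) + a * (if a + x < b + y then 1 else 0)

lemma cellMisclassification_eq (a b x y : ℝ) :
    cellMisclassification a b x y = a + (b - a) * if y ≤ (a - b) + x then 1 else 0 := by
  unfold cellMisclassification
  split_ifs <;> linarith

lemma integral_cellMisclassification {Ω : Type*} [MeasurableSpace Ω] {P : Measure Ω}
    [IsProbabilityMeasure P] {X Y : Ω → ℝ} (hX : Measurable X) (hY : Measurable Y)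
    (a b : ℝ) :
    ∫ ω, cellMisclassification a b (X ω) (Y ω) ∂P
      = a + (b - a) * P.real {ω | Y ω ≤ (a - b) + X ω} := by
  set E := {ω | Y ω ≤ (a - b) + X ω}
  have hE : MeasurableSet E := measurableSet_le hY (measurable_const.add hX)
  have hpt : ∀ ω, cellMisclassification a b (X ω) (Y ω) = a + (b - a) * E.indicator 1 ω := by
    intro ω
    by_cases h : ω ∈ E <;> simp_all [cellMisclassification_eq, E]
  have hint : Integrable (E.indicator 1) P := (integrable_const (1 : ℝ)).indicator hE
  rw [integral_congr_ae (Filter.Eventually.of_forall hpt),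
    integral_add (integrable_const a) (hint.const_mul _), integral_const_mul,
    integral_indicator_one hE, integral_const, probReal_univ, one_smul]

end ProbabilityTheory

theorem expected_cell_misclassification {Ω : Type*} [MeasurableSpace Ω]
    (P : Measure Ω) [IsProbabilityMeasure P]
    (ε : ℝ) (hε : 0 < ε) (Z₁ Z₂ : Ω → ℝ)
    (hZ₁ : Measurable Z₁) (hZ₂ : Measurable Z₂)
    (hindep : IndepFun Z₁ Z₂ P)
    (hlaw₁ : Measure.map Z₁ P =
      volume.withDensity (fun z => ENNReal.ofReal (ε / 2 * Real.exp (-ε * |z|))))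
    (hlaw₂ : Measure.map Z₂ P =
      volume.withDensity (fun z => ENNReal.ofReal (ε / 2 * Real.exp (-ε * |z|))))
    (a b : ℝ) :
    ∫ ω, (b * (if a + Z₁ ω ≥ b + Z₂ ω then (1 : ℝ) else 0)
        + a * (if a + Z₁ ω < b + Z₂ ω then (1 : ℝ) else 0)) ∂P =
      min a b * (1 - Real.exp (-ε * |a - b|) / 2 * (1 + ε * |a - b| / 2))
        + max a b * (Real.exp (-ε * |a - b|) / 2 * (1 + ε * |a - b| / 2)) := by
  change ∫ ω, cellMisclassification a b (Z₁ ω) (Z₂ ω) ∂P =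
    min a b * (1 - laplaceDiffTail ε |a - b|) + max a b * laplaceDiffTail ε |a - b|
  rw [integral_cellMisclassification hZ₁ hZ₂, measureReal_le_add_eq_integral hZ₁ hZ₂ hindep,
    show Measure.map Z₁ P = laplaceReal ε from hlaw₁,
    show Measure.map Z₂ P = laplaceReal ε from hlaw₂,
    integral_laplaceReal_real_Iic_add hε]
  rcases le_total b a with hba | hab
  · rw [integral_laplaceCDFReal_add_mul_of_nonneg hε (sub_nonneg.2 hba),
      abs_of_nonneg (sub_nonneg.2 hba), min_eq_right hba, max_eq_left hba]
    ring
  · rw [integral_laplaceCDFReal_add_mul_of_nonpos hε (sub_nonpos.2 hab),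
      abs_of_nonpos (sub_nonpos.2 hab), min_eq_left hab, max_eq_right hab]
    ring
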